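/- LIA quantifier elimination for constraint implication: let β be a ground term and Γ₁ = (s₁ ⪯ β ∧ … ∧ sₙ ⪯ β), Γ₂ = (t₁ ⪯ β ∧ … ∧ t_m ⪯ β) two constraints. Then the condition 'for every substitution σ grounding for Γ₁ with Γ₁σ true there exists a substitution σ' such that Γ₂σσ' is true' holds if and only if the implication lic(s₁ ⪯ β) ∧ … ∧ lic(sₙ ⪯ β) → lic(t₁ ⪯ β) ∧ … ∧ lic(t_m ⪯ β) is valid, i.e. true under every assignment of positive integers to its variables. -/

import Mathlib

namespace NGCC

inductive Tm (F : Type) : Type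
  | var : ℕ → Tm F
  | app : F → List (Tm F) → Tm F

instance {F : Type} : Inhabited (Tm F) := ⟨Tm.var 0⟩

namespace Tm
variable {F : Type}

def subst (σ : ℕ → Tm F) : Tm F → Tm F
  | var x => σ x
  | app f ts => app f (ts.attach.map fun t => t.1.subst σ)
  decreasing_by simp only [app.sizeOf_spec]; have h := List.sizeOf_lt_of_mem t.2; omega

def varsList : Tm F → List ℕ
  | var x => [x]
  | app _ ts => (ts.attach.map fun t => t.1.varsList).flatten
  decreasing_by simp only [app.sizeOf_spec]; have h := List.sizeOf_lt_of_mem t.2; omega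

def varsIn (t : Tm F) : Set ℕ := {x | x ∈ t.varsList}

def Ground (t : Tm F) : Prop := t.varsList = []

def size : Tm F → ℕ
  | var _ => 1
  | app _ ts => 1 + (ts.attach.map fun t => t.1.size).sum
  decreasing_by simp only [app.sizeOf_spec]; have h := List.sizeOf_lt_of_mem t.2; omega

def count (x : ℕ) : Tm F → ℕ
  | var y => if y = x then 1 else 0
  | app _ ts => (ts.attach.map fun t => count x t.1).sum
  decreasing_by simp only [app.sizeOf_spec]; have h := List.sizeOf_lt_of_mem t.2; omega

def eval {α : Type} (I : F → List α → α) (v : ℕ → α) : Tm F → α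
  | var x => v x
  | app f ts => I f (ts.attach.map fun t => t.1.eval I v)
  decreasing_by simp only [app.sizeOf_spec]; have h := List.sizeOf_lt_of_mem t.2; omega

end Tm


abbrev Subst (F : Type) := ℕ → Tm F

def Subst.dom {F : Type} (σ : Subst F) : Set ℕ := {x | σ x ≠ Tm.var x}

def Subst.comp {F : Type} (σ δ : Subst F) : Subst F := fun x => (σ x).subst δ

structure CTerm (F : Type) where
  constr : Set (Tm F)
  term : Tm F

abbrev CClass (F : Type) := Set (CTerm F)

variable {F : Type}

/-- Application of a substitution to a constraint (set of atoms `u ∈ M`). -/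
def substConstr (Γ : Set (Tm F)) (σ : Subst F) : Set (Tm F) := (fun u => u.subst σ) '' Γ

def CTerm.subst (ct : CTerm F) (σ : Subst F) : CTerm F :=
  ⟨substConstr ct.constr σ, ct.term.subst σ⟩

def substClass (A : CClass F) (σ : Subst F) : CClass F := (fun ct => ct.subst σ) '' A

/-- `Γσ` is true: every atom of `Γσ` belongs to `M`. -/
def ConstrHolds (M : Set (Tm F)) (Γ : Set (Tm F)) (σ : Subst F) : Prop :=
  substConstr Γ σ ⊆ M

/-- Satisfiability of a constraint with respect to `M`. -/
def ConstrSat (M : Set (Tm F)) (Γ : Set (Tm F)) : Prop :=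
  ∃ σ : Subst F, ConstrHolds M Γ σ

/-- `σ` is grounding for the class `A` (for all its constrained terms). -/
def GroundingForClass (σ : Subst F) (A : CClass F) : Prop :=
  ∀ ct ∈ A, (ct.term.subst σ).Ground ∧ ∀ u ∈ ct.constr, (u.subst σ).Ground

/-- Separating variables of a class. -/
def sepVars (A : CClass F) : Set ℕ := ⋂ ct ∈ A, (CTerm.term ct).varsIn

/-- All variables of the terms of a class. -/
def termVars (A : CClass F) : Set ℕ := ⋃ ct ∈ A, (CTerm.term ct).varsIn

/-- Free variables of a class. -/
def freeVars (A : CClass F) : Set ℕ := termVars A \ sepVars A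

/-- All variables occurring in a class (terms and constraints). -/
def varsAll (A : CClass F) : Set ℕ :=
  ⋃ ct ∈ A, ((CTerm.term ct).varsIn ∪ ⋃ u ∈ CTerm.constr ct, u.varsIn)

/-- `gnd'(A)`. -/
def gnd' (M : Set (Tm F)) (A : CClass F) : Set (CClass F) :=
  { B | ∃ σ : Subst F, Subst.dom σ = sepVars A ∧ (∀ x ∈ Subst.dom σ, (σ x).Ground) ∧
      B = { ct' | ∃ ct ∈ A, ConstrSat M (substConstr (CTerm.constr ct) σ) ∧ ct' = ct.subst σ } }

/-- `gnd(A)`: sets of ground terms. -/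
def gnd (M : Set (Tm F)) (A : CClass F) : Set (Set (Tm F)) :=
  { S | ∃ B ∈ gnd' M A,
      S = { t | ∃ σ : Subst F, GroundingForClass σ B ∧
              ∃ ct ∈ B, ConstrHolds M (CTerm.constr ct) σ ∧ t = (CTerm.term ct).subst σ } }

/-- The elements of `gnd(A)` regarded as classes of constrained ground terms. -/
def gndCl (M : Set (Tm F)) (A : CClass F) : Set (CClass F) :=
  { S | ∃ B ∈ gnd' M A,
      S = { ct' | ∃ σ : Subst F, GroundingForClass σ B ∧
              ∃ ct ∈ B, ConstrHolds M (CTerm.constr ct) σ ∧ ct' = ct.subst σ } }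

/-- `B` subsumes `A`. -/
def Subsumes (M : Set (Tm F)) (B A : CClass F) : Prop :=
  ∀ A' ∈ gnd M A, ∃ B' ∈ gnd M B, A' ⊆ B'

/-- `A` is `M`-constrained: the atom `sᵢ ∈ M` occurs in `Γᵢ` for each `Γᵢ ∥ sᵢ ∈ A`. -/
def MConstrained (A : CClass F) : Prop := ∀ ct ∈ A, CTerm.term ct ∈ CTerm.constr ct

/-- `ρ` is a renaming of the free variables of `A` to fresh variables. -/
def IsNormRenaming (A : CClass F) (ρ : Subst F) : Prop :=
  (∀ x, ∃ y, ρ x = Tm.var y) ∧ (∀ x, x ∉ freeVars A → ρ x = Tm.var x) ∧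
  (∀ x ∈ freeVars A, ∀ x' ∈ freeVars A, ρ x = ρ x' → x = x') ∧
  (∀ x ∈ freeVars A, ∀ y, ρ x = Tm.var y → y ∉ varsAll A)

/-- The normal class `norm(A)` for the renaming `ρ`. -/
def normC (A : CClass F) (ρ : Subst F) : CClass F :=
  { ct' | ∃ ct ∈ A, ct' = ⟨CTerm.constr ct ∪ substConstr (CTerm.constr ct) ρ, CTerm.term ct⟩ } ∪
  { ct' | ∃ ct ∈ A, ((CTerm.term ct).varsIn ∩ freeVars A).Nonempty ∧
      ct' = ⟨CTerm.constr ct ∪ substConstr (CTerm.constr ct) ρ, (CTerm.term ct).subst ρ⟩ }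

/-- `Aμ` for a grounding substitution `μ`: the set of ground terms
`{sμ | Γ ∥ s ∈ A and Γμ true}`. -/
def applyClass (M : Set (Tm F)) (A : CClass F) (μ : Subst F) : Set (Tm F) :=
  { t | ∃ ct ∈ A, ConstrHolds M (CTerm.constr ct) μ ∧ t = (CTerm.term ct).subst μ }

/-- Subterm relation. -/
inductive Subterm {F : Type} : Tm F → Tm F → Prop
  | refl (t : Tm F) : Subterm t t
  | app {s t : Tm F} (f : F) (ts : List (Tm F)) : t ∈ ts → Subterm s t → Subterm s (Tm.app f ts)

/-- `s` occurs as a (sub)term in `Π`. -/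
def OccursIn (s : Tm F) (P : Set (CClass F)) : Prop :=
  ∃ A ∈ P, ∃ ct ∈ A, Subterm s (CTerm.term ct) ∨ ∃ u ∈ CTerm.constr ct, Subterm s u

/-- `M` is `Π`-closed for the ground term `t`. -/
def PiClosed (M : Set (Tm F)) (P : Set (CClass F)) (t : Tm F) : Prop :=
  ∀ s, OccursIn s P → ∀ σ : Subst F, s.subst σ ∈ M →
    ∀ δ : Subst F, (∀ x, σ x ≠ δ x → δ x = t) → s.subst δ ∈ M

/-- Semantic equational consequence: every model of the (implicitly universally
quantified) equations is a model of `s ≈ t`. -/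
def Entails (Eqs : Set (Tm F × Tm F)) (s t : Tm F) : Prop :=
  ∀ (α : Type) (_ : Nonempty α) (I : F → List α → α) (v : ℕ → α),
    (∀ e ∈ Eqs, ∀ w : ℕ → α, Tm.eval I w e.1 = Tm.eval I w e.2) →
    Tm.eval I v s = Tm.eval I v t

/-- `gnd_M(E)`: ground instances of equations of `E` with all ground terms in `M`. -/
def gndM (M : Set (Tm F)) (E : Set (Tm F × Tm F)) : Set (Tm F × Tm F) :=
  { e | ∃ p ∈ E, ∃ σ : Subst F,
      e = (Tm.subst σ p.1, Tm.subst σ p.2) ∧ Tm.subst σ p.1 ∈ M ∧ Tm.subst σ p.2 ∈ M }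

def IsUnifier (μ : Subst F) (s t : Tm F) : Prop := s.subst μ = t.subst μ

def IsMGU (μ : Subst F) (s t : Tm F) : Prop :=
  IsUnifier μ s t ∧ ∀ τ : Subst F, IsUnifier τ s t → ∃ δ : Subst F, τ = Subst.comp μ δ

/-- Simultaneous most general unifier of the equations `s₁ = t₁` and `s₂ = t₂`. -/
def IsSimMGU (μ : Subst F) (s₁ t₁ s₂ t₂ : Tm F) : Prop :=
  IsUnifier μ s₁ t₁ ∧ IsUnifier μ s₂ t₂ ∧
  ∀ τ : Subst F, IsUnifier τ s₁ t₁ → IsUnifier τ s₂ t₂ → ∃ δ : Subst F, τ = Subst.comp μ δ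

/-- Conjoin a constraint to every constrained term of a class. -/
def addConstr (A : CClass F) (Γ : Set (Tm F)) : CClass F :=
  { ct' | ∃ ct ∈ A, ct' = ⟨CTerm.constr ct ∪ Γ, CTerm.term ct⟩ }

/-- The rules of the calculus CC(X). -/
inductive Step {F : Type} (M : Set (Tm F)) : Set (CClass F) → Set (CClass F) → Prop
  | merge (P : Set (CClass F)) (A B C' : CClass F) (ρA ρB μ : Subst F) (ct₁ ct₂ : CTerm F)
      (hA : A ∈ P) (hB : B ∈ P)
      (hρA : IsNormRenaming A ρA) (hρB : IsNormRenaming B ρB)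
      (h1 : ct₁ ∈ A) (h2 : ct₂ ∈ B)
      (hmgu : IsMGU μ ct₁.term ct₂.term)
      (hC' : C' = substClass (addConstr (normC A ρA) (ct₁.constr ∪ ct₂.constr) ∪
                               addConstr (normC B ρB) (ct₁.constr ∪ ct₂.constr)) μ)
      (hnsub : ∀ C ∈ P, ¬ Subsumes M C C') :
      Step M P (insert C' P)
  | deduction (P : Set (CClass F)) (A B C' : CClass F) (f : F)
      (ss ts ss' ts' : List (Tm F)) (Γ Δ : Set (Tm F)) (Γs Δs : List (Set (Tm F))) (μ : Subst F)
      (hA : A ∈ P) (hB : B ∈ P)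
      (h1 : (⟨Γ, Tm.app f ss⟩ : CTerm F) ∈ A)
      (h2 : (⟨Δ, Tm.app f ts⟩ : CTerm F) ∈ B)
      (hl1 : ss'.length = ss.length) (hl2 : ts'.length = ss.length)
      (hl3 : ts.length = ss.length) (hl4 : Γs.length = ss.length) (hl5 : Δs.length = ss.length)
      (hside : ∀ i < ss.length, ∃ D ∈ P, ∃ ρ : Subst F, IsNormRenaming D ρ ∧
          (⟨Γs[i]!, ss'[i]!⟩ : CTerm F) ∈ normC D ρ ∧ (⟨Δs[i]!, ts'[i]!⟩ : CTerm F) ∈ normC D ρ)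
      (hmgu : IsSimMGU μ (Tm.app f ss') (Tm.app f ss) (Tm.app f ts') (Tm.app f ts))
      (hC' : C' = substClass
          ({⟨Γ ∪ Δ ∪ ⋃₀ {G | G ∈ Γs} ∪ ⋃₀ {G | G ∈ Δs}, Tm.app f ss'⟩,
            ⟨Γ ∪ Δ ∪ ⋃₀ {G | G ∈ Γs} ∪ ⋃₀ {G | G ∈ Δs}, Tm.app f ts'⟩} : CClass F) μ)
      (hnsub : ∀ C ∈ P, ¬ Subsumes M C C') :
      Step M P (insert C' P)
  | subsump (P : Set (CClass F)) (A B : CClass F)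
      (hA : A ∈ P) (hB : B ∈ P) (hne : A ≠ B) (hsub : Subsumes M B A) :
      Step M P (P \ {A})

/-- The single-term class `{f(x₁,…,x_k) ∈ M ∥ f(x₁,…,x_k)}`. -/
def singleTermClass (ar : F → ℕ) (f : F) : CClass F :=
  {⟨{Tm.app f ((List.range (ar f)).map Tm.var)}, Tm.app f ((List.range (ar f)).map Tm.var)⟩}

/-- The initial state `Π₀` of CC(X) for the equations `E`. -/
def initState (ar : F → ℕ) (E : Set (Tm F × Tm F)) : Set (CClass F) :=
  { A | ∃ p ∈ E, A = ({⟨{p.1, p.2}, p.1⟩, ⟨{p.1, p.2}, p.2⟩} : CClass F) } ∪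
  { A | ∃ f : F, A = singleTermClass ar f }

/-- `B` subsumes `A` by matching. -/
def SubsumesByMatching (M : Set (Tm F)) (B A : CClass F) : Prop :=
  ∃ σ : Subst F, Subst.dom σ ⊆ sepVars B ∧ (∀ x ∈ sepVars B, (σ x).varsIn ⊆ varsAll A) ∧
    ∀ ct ∈ A, ∃ τ : Subst F, Subst.dom τ ⊆ freeVars B ∧
      (∀ y ∈ freeVars B, (τ y).varsIn ⊆ varsAll A) ∧
      ∃ ct' ∈ B, CTerm.term ct = ((CTerm.term ct').subst σ).subst τ ∧
        ∀ δ : Subst F, ConstrHolds M (CTerm.constr ct) δ →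
          ∃ δ' : Subst F,
            ConstrHolds M (substConstr (substConstr (substConstr (CTerm.constr ct') σ) τ) δ) δ'

/-- `M` determined by the symbol-count ordering and a bound `β`. -/
def Mle (β : Tm F) : Set (Tm F) := { t | t.Ground ∧ t.size ≤ β.size }

def varsFinset (t : Tm F) : Finset ℕ := t.varsList.toFinset

/-- Truth of the LIA abstraction `lic(t ⪯ β)` under an integer assignment `v`. -/
def licHolds (t β : Tm F) (v : ℕ → ℕ) : Prop :=
  (∀ x ∈ varsFinset t, 1 ≤ v x) ∧
  (∑ x ∈ varsFinset t, (t.count x : ℤ) * (v x : ℤ)) ≤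
    (β.size : ℤ) - ((t.size : ℤ) - ∑ x ∈ varsFinset t, (t.count x : ℤ))


/-!
Under a substitution `σ` every occurrence of a variable `x` in `t` is replaced by a term of
size `size (σ x)`, so `size (tσ) = size t - Σ #(x,t) + Σ #(x,t) · size (σ x)`. Hence
`lic(t ⪯ β)` under the assignment `x ↦ size (σ x)` says exactly that `(t ⪯ β)σ` is true.
Since every positive integer is the size of a ground term `c(c(⋯c()⋯))`, integer assignments
and grounding substitutions are interchangeable, and the existential `σ'` costs nothing:
sending every remaining variable to the constant `c()` does not change sizes.
-/

namespace Tm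

@[induction_eliminator]
theorem induction_on' {motive : Tm F → Prop} (var : ∀ x, motive (Tm.var x))
    (app : ∀ f ts, (∀ t ∈ ts, motive t) → motive (Tm.app f ts)) : ∀ t, motive t
  | Tm.var x => var x
  | Tm.app f ts => app f ts fun t _ => induction_on' var app t

@[simp]
theorem subst_var (σ : Subst F) (x : ℕ) : (var x).subst σ = σ x := by
  rw [subst]

@[simp]
theorem subst_app (σ : Subst F) (f : F) (ts : List (Tm F)) :
    (app f ts).subst σ = app f (ts.map (·.subst σ)) := by
  rw [subst]; simp

@[simp]
theorem varsList_var (x : ℕ) : (var x : Tm F).varsList = [x] := by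
  rw [varsList]

@[simp]
theorem varsList_app (f : F) (ts : List (Tm F)) :
    (app f ts).varsList = (ts.map varsList).flatten := by
  rw [varsList]; simp

@[simp]
theorem size_var (x : ℕ) : (var x : Tm F).size = 1 := by
  rw [size]

@[simp]
theorem size_app (f : F) (ts : List (Tm F)) : (app f ts).size = 1 + (ts.map size).sum := by
  rw [size]; simp

@[simp]
theorem count_var (x y : ℕ) : (var y : Tm F).count x = if y = x then 1 else 0 := by
  rw [count]

@[simp]
theorem count_app (x : ℕ) (f : F) (ts : List (Tm F)) :
    (app f ts).count x = (ts.map (count x)).sum := by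
  rw [count]; simp

theorem one_le_size (t : Tm F) : 1 ≤ t.size := by
  cases t <;> simp

theorem varsList_subst (σ : Subst F) (t : Tm F) :
    (t.subst σ).varsList = (t.varsList.map fun x => (σ x).varsList).flatten := by
  induction t with
  | var x => simp
  | app f ts ih =>
    simp only [subst_app, varsList_app, List.map_map, List.map_flatten, List.flatten_flatten]
    congr 1
    exact List.map_congr_left fun t ht => ih t ht

theorem ground_subst {σ : Subst F} {t : Tm F} (h : ∀ x ∈ t.varsList, (σ x).Ground) :
    (t.subst σ).Ground := by
  simpa [Ground, varsList_subst, List.flatten_eq_nil_iff] using h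

theorem subst_eq_self {σ : Subst F} {t : Tm F} (h : ∀ x ∈ t.varsList, σ x = var x) :
    t.subst σ = t := by
  induction t with
  | var x => simpa using h
  | app f ts ih =>
    simp only [subst_app, app.injEq, true_and]
    refine (List.map_congr_left fun t ht => ih t ht fun x hx => h x ?_).trans (List.map_id ts)
    simpa using ⟨t, ht, hx⟩

theorem subst_eq_self_of_ground {t : Tm F} (h : t.Ground) (σ : Subst F) : t.subst σ = t :=
  subst_eq_self (by simp [show t.varsList = [] from h])

theorem size_subst (σ : Subst F) (t : Tm F) :
    (t.subst σ).size + t.varsList.length = t.size + (t.varsList.map fun x => (σ x).size).sum := by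
  induction t with
  | var x => simp [add_comm]
  | app f ts ih =>
    simp only [subst_app, size_app, varsList_app, List.length_flatten, List.map_flatten,
      List.sum_flatten, List.map_map]
    have := congrArg List.sum (List.map_congr_left fun t ht => ih t ht)
    simp only [List.sum_map_add] at this
    simp only [Function.comp_def]
    omega

theorem size_subst_of_size_eq_one {σ : Subst F} (hσ : ∀ x, (σ x).size = 1) (t : Tm F) :
    (t.subst σ).size = t.size := by
  simpa [hσ] using size_subst σ t

theorem count_eq_count_varsList (x : ℕ) (t : Tm F) : t.count x = t.varsList.count x := by
  induction t with
  | var y => by_cases h : y = x <;> simp [h]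
  | app f ts ih =>
    simp only [count_app, varsList_app, List.count_flatten, List.map_map]
    exact congrArg List.sum (List.map_congr_left fun t ht => ih t ht)

/-- Terms carry no arities, so any symbol applied to `[]` is a constant. -/
def unary (c : F) : ℕ → Tm F
  | 0 => app c []
  | n + 1 => app c [unary c n]

theorem ground_unary (c : F) (n : ℕ) : (unary c n).Ground := by
  induction n with
  | zero => simp [unary, Ground]
  | succ n ih => simpa [unary, Ground] using ih

theorem size_unary (c : F) (n : ℕ) : (unary c n).size = n + 1 := by
  induction n with
  | zero => simp [unary]
  | succ n ih => simp [unary, ih, add_comm]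

end Tm

theorem sum_varsFinset_count_mul (t : Tm F) (g : ℕ → ℕ) :
    ∑ x ∈ varsFinset t, t.count x * g x = (t.varsList.map g).sum := by
  simp only [Finset.sum_list_map_count, varsFinset, Tm.count_eq_count_varsList, smul_eq_mul]

theorem sum_varsFinset_count (t : Tm F) :
    ∑ x ∈ varsFinset t, t.count x = t.varsList.length := by
  simpa using sum_varsFinset_count_mul t fun _ => 1

theorem licHolds_size_iff (t β : Tm F) (σ : Subst F) :
    licHolds t β (fun x => (σ x).size) ↔ (t.subst σ).size ≤ β.size := by
  have hsize := Tm.size_subst σ t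
  rw [← sum_varsFinset_count_mul, ← sum_varsFinset_count] at hsize
  simp only [licHolds, Tm.one_le_size, implies_true, true_and, ← Nat.cast_mul, ← Nat.cast_sum]
  omega

theorem exists_ground_subst_size_eq (c : F) (v : ℕ → ℕ) (hv : ∀ x, 1 ≤ v x) :
    ∃ σ : Subst F, (∀ x, (σ x).Ground) ∧ (fun x => (σ x).size) = v :=
  ⟨fun x => Tm.unary c (v x - 1), fun _ => Tm.ground_unary c _,
    funext fun x => by simp only [Tm.size_unary]; have := hv x; omega⟩

theorem lia_quantifier_elimination_general {F : Type} [Nonempty F]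
    (β : Tm F) (Γ₁ Γ₂ : List (Tm F)) :
    (∀ σ : Subst F, (∀ s ∈ Γ₁, (Tm.subst σ s).Ground) →
        (∀ s ∈ Γ₁, (Tm.subst σ s).size ≤ β.size) →
        ∃ σ' : Subst F, ∀ u ∈ Γ₂,
          (Tm.subst σ' (Tm.subst σ u)).Ground ∧ (Tm.subst σ' (Tm.subst σ u)).size ≤ β.size)
    ↔ (∀ v : ℕ → ℕ, (∀ x, 1 ≤ v x) →
        (∀ s ∈ Γ₁, licHolds s β v) → ∀ u ∈ Γ₂, licHolds u β v) := by
  obtain ⟨c⟩ := ‹Nonempty F›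
  constructor
  · intro H v hv hΓ₁ u hu
    obtain ⟨σ, hσ, rfl⟩ := exists_ground_subst_size_eq c v hv
    have hground (t : Tm F) : (t.subst σ).Ground := Tm.ground_subst fun x _ => hσ x
    obtain ⟨σ', hσ'⟩ :=
      H σ (fun s _ => hground s) fun s hs => (licHolds_size_iff s β σ).1 (hΓ₁ s hs)
    have hu := (hσ' u hu).2
    rw [Tm.subst_eq_self_of_ground (hground u)] at hu
    exact (licHolds_size_iff u β σ).2 hu
  · intro H σ _ hΓ₁
    refine ⟨fun _ => Tm.unary c 0, fun u hu =>
      ⟨Tm.ground_subst fun _ _ => Tm.ground_unary c 0, ?_⟩⟩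
    rw [Tm.size_subst_of_size_eq_one fun _ => Tm.size_unary c 0]
    refine (licHolds_size_iff u β σ).1 (H _ (fun x => Tm.one_le_size _) (fun s hs => ?_) u hu)
    exact (licHolds_size_iff s β σ).2 (hΓ₁ s hs)

/-- LIA Quantifier Elimination. -/
theorem lia_quantifier_elimination {F : Type} [Nonempty F]
    (β : Tm F) (hβ : β.Ground) (Γ₁ Γ₂ : List (Tm F)) :
    (∀ σ : Subst F, (∀ s ∈ Γ₁, (Tm.subst σ s).Ground) →
        (∀ s ∈ Γ₁, (Tm.subst σ s).size ≤ β.size) →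
        ∃ σ' : Subst F, ∀ u ∈ Γ₂,
          (Tm.subst σ' (Tm.subst σ u)).Ground ∧ (Tm.subst σ' (Tm.subst σ u)).size ≤ β.size)
    ↔ (∀ v : ℕ → ℕ, (∀ x, 1 ≤ v x) →
        (∀ s ∈ Γ₁, licHolds s β v) → ∀ u ∈ Γ₂, licHolds u β v) :=
  lia_quantifier_elimination_general β Γ₁ Γ₂

end NGCC
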